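/- Let H and G be Lie groups, Φ₀ : H → G a Lie group homomorphism, and let Φ, Ψ : H × J → G be two deformations of Φ₀ which are equivalent, i.e. there is a smooth curve c : J → G with c(0) = 1 such that Ψ(h,ε) = c(ε) · Φ(h,ε) · c(ε)⁻¹ for all h ∈ H and ε ∈ J. Let α := c'(0) ∈ T₁G be the velocity of c at 0. Then the associated deformation cocycles at ε = 0 are cohomologous: for every h ∈ H, X^Ψ₀(h) − X^Φ₀(h) = dR_{Φ₀(h)}(α) − dL_{Φ₀(h)}(α) in T_{Φ₀(h)}G. -/

import Mathlib

open scoped Manifold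
open Set

/-- The canonical identification of each tangent space of a manifold modeled on `E` with `E`
(the tangent space `TangentSpace I x` is by definition the model vector space `E`). -/
def tangentCoe {𝕜 E H : Type*} [NontriviallyNormedField 𝕜] [NormedAddCommGroup E]
    [NormedSpace 𝕜 E] [TopologicalSpace H] (I : ModelWithCorners 𝕜 E H)
    {M : Type*} [TopologicalSpace M] [ChartedSpace H M] {x : M}
    (v : TangentSpace I x) : E := v

/-- Product rule for curves in a Lie group. -/
theorem my_mul_rule
    {E₂ : Type*} [NormedAddCommGroup E₂] [NormedSpace ℝ E₂]
    {H₂ : Type*} [TopologicalSpace H₂] {I₂ : ModelWithCorners ℝ E₂ H₂}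
    {G₂ : Type*} [TopologicalSpace G₂] [ChartedSpace H₂ G₂] [Group G₂] [LieGroup I₂ (⊤ : ℕ∞) G₂]
    (u v : ℝ → G₂) (t : ℝ)
    (hu : MDifferentiableAt 𝓘(ℝ, ℝ) I₂ u t) (hv : MDifferentiableAt 𝓘(ℝ, ℝ) I₂ v t)
    (x y : G₂) (hx : u t = x) (hy : v t = y) :
    tangentCoe I₂ (mfderiv 𝓘(ℝ, ℝ) I₂ (fun ε => u ε * v ε) t (1 : ℝ)) =
      tangentCoe I₂ (mfderiv I₂ I₂ (fun g => g * y) x (mfderiv 𝓘(ℝ, ℝ) I₂ u t (1 : ℝ))) +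
      tangentCoe I₂ (mfderiv I₂ I₂ (fun g => x * g) y (mfderiv 𝓘(ℝ, ℝ) I₂ v t (1 : ℝ))) := by
  subst hx hy
  have hmul : MDifferentiableAt (I₂.prod I₂) I₂ (fun p : G₂ × G₂ => p.1 * p.2) (u t, v t) :=
    (contMDiff_mul I₂ (⊤ : ℕ∞)).mdifferentiableAt (by simp)
  have heq : (fun ε => u ε * v ε)
      = (fun p : G₂ × G₂ => p.1 * p.2) ∘ (fun ε => (u ε, v ε)) := rfl
  rw [heq, mfderiv_comp t hmul (hu.prodMk hv)]
  erw [ContinuousLinearMap.comp_apply]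
  rw [hu.mfderiv_prod hv]
  exact mfderiv_prod_eq_add_apply hmul

/-- The derivative of the pointwise inverse of a curve through `1` is the negative. -/
theorem my_inv_rule
    {E₂ : Type*} [NormedAddCommGroup E₂] [NormedSpace ℝ E₂]
    {H₂ : Type*} [TopologicalSpace H₂] {I₂ : ModelWithCorners ℝ E₂ H₂}
    {G₂ : Type*} [TopologicalSpace G₂] [ChartedSpace H₂ G₂] [Group G₂] [LieGroup I₂ (⊤ : ℕ∞) G₂]
    (c : ℝ → G₂) (hc : MDifferentiableAt 𝓘(ℝ, ℝ) I₂ c 0) (hc0 : c 0 = 1) :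
    tangentCoe I₂ (mfderiv 𝓘(ℝ, ℝ) I₂ (fun ε => (c ε)⁻¹) 0 (1 : ℝ)) =
      - tangentCoe I₂ (mfderiv 𝓘(ℝ, ℝ) I₂ c 0 (1 : ℝ)) := by
  have hinv : MDifferentiableAt 𝓘(ℝ, ℝ) I₂ (fun ε => (c ε)⁻¹) 0 := by
    exact MDifferentiableAt.comp 0 ((contMDiff_inv I₂ (⊤ : ℕ∞)).mdifferentiableAt (by simp)) hc
  have hone : (fun ε : ℝ => c ε * (c ε)⁻¹) = fun _ : ℝ => (1 : G₂) := by
    funext ε; exact mul_inv_cancel (c ε)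
  have key := my_mul_rule c (fun ε => (c ε)⁻¹) 0 hc hinv 1 1 hc0 (by simp [hc0])
  rw [hone, mfderiv_const] at key
  rw [show (fun g : G₂ => g * 1) = id from funext fun g => mul_one g,
    show (fun g : G₂ => 1 * g) = id from funext fun g => one_mul g, mfderiv_id] at key
  simp only [ContinuousLinearMap.id_apply, ContinuousLinearMap.zero_apply,
    tangentCoe] at key ⊢
  exact eq_neg_of_add_eq_zero_right key.symm

/-- Equivalent deformations of a Lie group homomorphism have cohomologous
deformation cocycles at time `0`:
`X^Ψ₀(h) − X^Φ₀(h) = dR_{Φ₀(h)}(α) − dL_{Φ₀(h)}(α)` where `α = c'(0)`. -/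
theorem equivalent_deformations_cohomologous_cocycles
    {E₁ : Type*} [NormedAddCommGroup E₁] [NormedSpace ℝ E₁] [FiniteDimensional ℝ E₁]
    {H₁ : Type*} [TopologicalSpace H₁] {I₁ : ModelWithCorners ℝ E₁ H₁}
    {G₁ : Type*} [TopologicalSpace G₁] [ChartedSpace H₁ G₁] [Group G₁] [LieGroup I₁ (⊤ : ℕ∞) G₁]
    {E₂ : Type*} [NormedAddCommGroup E₂] [NormedSpace ℝ E₂] [FiniteDimensional ℝ E₂]
    {H₂ : Type*} [TopologicalSpace H₂] {I₂ : ModelWithCorners ℝ E₂ H₂}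
    {G₂ : Type*} [TopologicalSpace G₂] [ChartedSpace H₂ G₂] [Group G₂] [LieGroup I₂ (⊤ : ℕ∞) G₂]
    -- `J ⊆ ℝ` is an open interval containing `0`
    (J : Set ℝ) (hJopen : IsOpen J) (hJconn : J.OrdConnected) (hJ0 : (0 : ℝ) ∈ J)
    (Φ₀ : G₁ →* G₂) (Φ Ψ : G₁ → ℝ → G₂)
    -- `Φ` is a deformation of `Φ₀`
    (hΦsmooth : ContMDiffOn (I₁.prod 𝓘(ℝ, ℝ)) I₂ (⊤ : ℕ∞)
      (fun p : G₁ × ℝ => Φ p.1 p.2) (univ ×ˢ J))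
    (hΦhom : ∀ ε ∈ J, ∀ a b : G₁, Φ (a * b) ε = Φ a ε * Φ b ε)
    (hΦ0 : ∀ h, Φ h 0 = Φ₀ h)
    -- `Ψ` is a deformation of `Φ₀`
    (hΨsmooth : ContMDiffOn (I₁.prod 𝓘(ℝ, ℝ)) I₂ (⊤ : ℕ∞)
      (fun p : G₁ × ℝ => Ψ p.1 p.2) (univ ×ˢ J))
    (hΨhom : ∀ ε ∈ J, ∀ a b : G₁, Ψ (a * b) ε = Ψ a ε * Ψ b ε)
    (hΨ0 : ∀ h, Ψ h 0 = Φ₀ h)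
    -- `Φ` and `Ψ` are equivalent deformations via the smooth curve `c` with `c 0 = 1`
    (c : ℝ → G₂) (hcsmooth : ContMDiffOn 𝓘(ℝ, ℝ) I₂ (⊤ : ℕ∞) c J) (hc0 : c 0 = 1)
    (hconj : ∀ h : G₁, ∀ ε ∈ J, Ψ h ε = c ε * Φ h ε * (c ε)⁻¹) :
    -- with `α := c'(0) ∈ T₁G`, the two deformation cocycles at `ε = 0` are cohomologous
    ∀ h : G₁,
      tangentCoe I₂ (mfderiv 𝓘(ℝ, ℝ) I₂ (Ψ h) 0 (1 : ℝ)) -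
        tangentCoe I₂ (mfderiv 𝓘(ℝ, ℝ) I₂ (Φ h) 0 (1 : ℝ)) =
      tangentCoe I₂ (mfderiv I₂ I₂ (fun g => g * Φ₀ h) (1 : G₂)
          (mfderiv 𝓘(ℝ, ℝ) I₂ c 0 (1 : ℝ))) -
        tangentCoe I₂ (mfderiv I₂ I₂ (fun g => Φ₀ h * g) (1 : G₂)
          (mfderiv 𝓘(ℝ, ℝ) I₂ c 0 (1 : ℝ))) := by
  intro h
  have hJn : J ∈ nhds (0:ℝ) := hJopen.mem_nhds hJ0
  have hc : MDifferentiableAt 𝓘(ℝ, ℝ) I₂ c 0 :=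
    (hcsmooth.contMDiffAt hJn).mdifferentiableAt (by simp)
  have hΦh : MDifferentiableAt 𝓘(ℝ, ℝ) I₂ (Φ h) 0 := by
    have h1 : ContMDiffAt (I₁.prod 𝓘(ℝ, ℝ)) I₂ (⊤ : ℕ∞) (fun p : G₁ × ℝ => Φ p.1 p.2) (h, 0) :=
      hΦsmooth.contMDiffAt ((isOpen_univ.prod hJopen).mem_nhds (by simp [hJ0]))
    have h2 : ContMDiffAt 𝓘(ℝ, ℝ) (I₁.prod 𝓘(ℝ, ℝ)) (⊤ : ℕ∞) (fun ε : ℝ => (h, ε)) 0 :=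
      contMDiffAt_const.prodMk contMDiffAt_id
    exact (h1.comp 0 h2).mdifferentiableAt (by simp)
  have hinv : MDifferentiableAt 𝓘(ℝ, ℝ) I₂ (fun ε => (c ε)⁻¹) 0 :=
    MDifferentiableAt.comp 0 ((contMDiff_inv I₂ (⊤ : ℕ∞)).mdifferentiableAt (by simp)) hc
  have hcΦ : MDifferentiableAt 𝓘(ℝ, ℝ) I₂ (fun ε => c ε * Φ h ε) 0 :=
    MDifferentiableAt.comp 0 ((contMDiff_mul I₂ (⊤ : ℕ∞)).mdifferentiableAt (by simp))
      (hc.prodMk hΦh)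
  have hΨeq : Ψ h =ᶠ[nhds (0:ℝ)] (fun ε => c ε * Φ h ε * (c ε)⁻¹) :=
    Filter.eventuallyEq_of_mem hJn (fun ε hε => hconj h ε hε)
  have hD : @Eq (ℝ →L[ℝ] E₂) (mfderiv 𝓘(ℝ, ℝ) I₂ (Ψ h) 0)
      (mfderiv 𝓘(ℝ, ℝ) I₂ (fun ε => c ε * Φ h ε * (c ε)⁻¹) 0) := hΨeq.mfderiv_eq
  have e0 : tangentCoe I₂ (mfderiv 𝓘(ℝ, ℝ) I₂ (Ψ h) 0 (1 : ℝ)) =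
      tangentCoe I₂ (mfderiv 𝓘(ℝ, ℝ) I₂ (fun ε => c ε * Φ h ε * (c ε)⁻¹) 0 (1 : ℝ)) :=
    congrArg (fun L : ℝ →L[ℝ] E₂ => L (1 : ℝ)) hD
  have key1 := my_mul_rule (fun ε => c ε * Φ h ε) (fun ε => (c ε)⁻¹) 0 hcΦ hinv
    (Φ₀ h) 1 (by simp [hc0, hΦ0]) (by simp [hc0])
  have key2 := my_mul_rule c (Φ h) 0 hc hΦh 1 (Φ₀ h) hc0 (hΦ0 h)
  have key3 := my_inv_rule c hc hc0
  beta_reduce at key1 key2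
  have key2' : tangentCoe I₂ (mfderiv 𝓘(ℝ, ℝ) I₂ (fun ε => c ε * Φ h ε) 0 (1 : ℝ)) =
      tangentCoe I₂ (mfderiv I₂ I₂ (fun g => g * Φ₀ h) (1 : G₂)
        (mfderiv 𝓘(ℝ, ℝ) I₂ c 0 (1 : ℝ))) +
      tangentCoe I₂ (mfderiv 𝓘(ℝ, ℝ) I₂ (Φ h) 0 (1 : ℝ)) := by
    rw [key2]
    congr 1
    rw [show (fun g : G₂ => (1 : G₂) * g) = id from funext fun g => one_mul g, mfderiv_id]
    rfl
  have key1' : tangentCoe I₂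
        (mfderiv 𝓘(ℝ, ℝ) I₂ (fun ε => c ε * Φ h ε * (c ε)⁻¹) 0 (1 : ℝ)) =
      tangentCoe I₂ (mfderiv 𝓘(ℝ, ℝ) I₂ (fun ε => c ε * Φ h ε) 0 (1 : ℝ)) +
      tangentCoe I₂ (mfderiv I₂ I₂ (fun g => Φ₀ h * g) (1 : G₂)
        (mfderiv 𝓘(ℝ, ℝ) I₂ (fun ε => (c ε)⁻¹) 0 (1 : ℝ))) := by
    rw [key1]
    congr 1
    rw [show (fun g : G₂ => g * (1 : G₂)) = id from funext fun g => mul_one g, mfderiv_id]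
    rfl
  have hneg : ∀ (x : G₂) (v : TangentSpace I₂ x),
      tangentCoe I₂ (-v) = - tangentCoe I₂ v := fun _ _ => rfl
  have key3' : tangentCoe I₂ (mfderiv I₂ I₂ (fun g => Φ₀ h * g) (1 : G₂)
        (mfderiv 𝓘(ℝ, ℝ) I₂ (fun ε => (c ε)⁻¹) 0 (1 : ℝ))) =
      - tangentCoe I₂ (mfderiv I₂ I₂ (fun g => Φ₀ h * g) (1 : G₂)
        (mfderiv 𝓘(ℝ, ℝ) I₂ c 0 (1 : ℝ))) := by
    have key3r : (mfderiv 𝓘(ℝ, ℝ) I₂ (fun ε => (c ε)⁻¹) 0 (1 : ℝ))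
        = -(mfderiv 𝓘(ℝ, ℝ) I₂ c 0 (1 : ℝ)) := key3
    rw [key3r]
    erw [map_neg]
    exact hneg _ _
  rw [e0, key1', key3', key2']
  abel
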